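/- arXiv:1511.03251 — 5 statements merged into one kernel-verified Lean document; each statement's English description precedes it below -/
import Mathlib

section
/- Let λ > 0 and k ≥ 1 be an integer, and let F̄(i) = ∑_{j≥i} e^{-λ} λ^j / j! denote the upper tail of the Poisson(λ) distribution. Then F̄(k-1)/F̄(k) ≤ 1 + k/λ. -/
/-!
Splitting off the first term, `F̄(k-1) = p(k-1) + F̄(k)` with `p j = e^{-λ} λ^j / j!`, and
`p(k-1) = (k/λ) p(k) ≤ (k/λ) F̄(k)` since `p k` is one of the terms of `F̄(k)`.
-/

open Nat Real

section Tail

variable {f : ℕ → ℝ}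

theorem Summable.ite_le (hf : Summable f) (i : ℕ) :
    Summable fun j => if i ≤ j then f j else 0 :=
  hf.summable_of_eq_zero_or_self fun j => by split <;> simp

theorem tsum_ite_le_eq_add (hf : Summable f) (m : ℕ) :
    ∑' j, (if m ≤ j then f j else 0) = f m + ∑' j, if m + 1 ≤ j then f j else 0 := by
  have hsplit : ∀ j, (if m ≤ j then f j else 0)
      = (if j = m then f m else 0) + (if m + 1 ≤ j then f j else 0) := fun j => by
    rcases lt_trichotomy j m with h | rfl | h
    · simp [h.not_ge, h.ne, show ¬ m + 1 ≤ j by omega]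
    · simp
    · simp [h.le, h.ne', show m + 1 ≤ j by omega]
  rw [tsum_congr hsplit, Summable.tsum_add (summable_of_ne_finset_zero (s := {m}) (by simp_all))
    (hf.ite_le (m + 1)), tsum_ite_eq]

theorem le_tsum_ite_le (hf : Summable f) (hf0 : ∀ j, 0 ≤ f j) (i : ℕ) :
    f i ≤ ∑' j, if i ≤ j then f j else 0 := by
  simpa using (hf.ite_le i).le_tsum i fun j _ => by split <;> simp [hf0]

theorem tsum_ite_le_div_succ_le (hf : Summable f) (hf0 : ∀ j, 0 ≤ f j) {m : ℕ} {c : ℝ}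
    (hc : 0 ≤ c) (hm : f m ≤ c * f (m + 1)) (hpos : 0 < f (m + 1)) :
    (∑' j, if m ≤ j then f j else 0) / (∑' j, if m + 1 ≤ j then f j else 0) ≤ 1 + c := by
  have hle := le_tsum_ite_le hf hf0 (m + 1)
  rw [tsum_ite_le_eq_add hf, div_le_iff₀ (hpos.trans_le hle)]
  nlinarith [mul_le_mul_of_nonneg_left hle hc]

end Tail

theorem summable_exp_neg_mul_pow_div_factorial (lam : ℝ) :
    Summable fun j : ℕ => exp (-lam) * lam ^ j / j ! := by
  simpa [mul_div_assoc] using (summable_pow_div_factorial lam).mul_left (exp (-lam))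

theorem exp_neg_mul_pow_div_factorial_eq_mul_succ {lam : ℝ} (hlam : lam ≠ 0) (m : ℕ) :
    exp (-lam) * lam ^ m / m ! = (m + 1) / lam * (exp (-lam) * lam ^ (m + 1) / (m + 1)!) := by
  rw [factorial_succ]
  push_cast
  field_simp
  ring

theorem poisson_tail_ratio_le_general (lam : ℝ) (hlam : 0 < lam) (k : ℕ)
    (Fbar : ℕ → ℝ)
    (hF : ∀ i : ℕ, Fbar i = ∑' j : ℕ, if i ≤ j then Real.exp (-lam) * lam ^ j / (Nat.factorial j) else 0) :
    Fbar (k - 1) / Fbar k ≤ 1 + k / lam := by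
  obtain _ | m := k
  · -- `0 - 1 = 0` in `ℕ`, so the ratio is `Fbar 0 / Fbar 0`
    simpa using div_self_le_one (Fbar 0)
  rw [add_tsub_cancel_right, hF, hF]
  push_cast
  exact tsum_ite_le_div_succ_le (summable_exp_neg_mul_pow_div_factorial lam)
    (fun j => by positivity) (by positivity)
    (exp_neg_mul_pow_div_factorial_eq_mul_succ hlam.ne' m).le (by positivity)

theorem poisson_tail_ratio_le (lam : ℝ) (hlam : 0 < lam) (k : ℕ) (hk : 1 ≤ k)
    (Fbar : ℕ → ℝ)
    (hF : ∀ i : ℕ, Fbar i = ∑' j : ℕ, if i ≤ j then Real.exp (-lam) * lam ^ j / (Nat.factorial j) else 0) :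
    Fbar (k - 1) / Fbar k ≤ 1 + k / lam :=
  poisson_tail_ratio_le_general lam hlam k Fbar hF
end

section
/- Let λ > 0 and k ≥ 1 be an integer, and let F̄(i) = ∑_{j≥i} e^{-λ} λ^j / j!. Then the quantity p = 1 - (F̄(k-1)/F̄(k) - k/λ) satisfies 0 ≤ p ≤ k/λ. -/
theorem poisson_survival_prob_bounds (lam : ℝ) (hlam : 0 < lam) (k : ℕ) (hk : 1 ≤ k)
    (Fbar : ℕ → ℝ)
    (hF : ∀ i : ℕ, Fbar i = ∑' j : ℕ, if i ≤ j then Real.exp (-lam) * lam ^ j / (Nat.factorial j) else 0) :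
    0 ≤ 1 - (Fbar (k - 1) / Fbar k - k / lam) ∧
      1 - (Fbar (k - 1) / Fbar k - k / lam) ≤ k / lam := by
  set P : ℕ → ℝ := fun j => Real.exp (-lam) * lam ^ j / (Nat.factorial j) with hP
  have hPpos : ∀ j, 0 < P j := by
    intro j
    apply div_pos (mul_pos (Real.exp_pos _) (pow_pos hlam j))
    exact_mod_cast Nat.factorial_pos j
  have hsumP : Summable P := by
    have h := (Real.summable_pow_div_factorial lam).mul_left (Real.exp (-lam))
    simpa [hP, mul_div_assoc] using h
  have hsum : ∀ i : ℕ, Summable (fun j => if i ≤ j then P j else 0) := by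
    intro i
    apply hsumP.of_nonneg_of_le
    · intro j; split <;> [exact (hPpos j).le; rfl]
    · intro j; split <;> [exact le_rfl; exact (hPpos j).le]
  -- split F(k-1) = P(k-1) + F(k)
  have hsplit : Fbar (k - 1) = P (k - 1) + Fbar k := by
    rw [hF (k - 1), hF k]
    have heq : ∀ j : ℕ, (if k - 1 ≤ j then P j else 0) =
        (if j = k - 1 then P (k - 1) else 0) + (if k ≤ j then P j else 0) := by
      intro j
      rcases eq_or_ne j (k - 1) with h | h
      · subst h
        have h1 : k - 1 ≤ k - 1 := le_rfl
        have h2 : ¬ k ≤ k - 1 := by omega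
        simp [h1, h2]
      · rcases le_or_gt k j with h3 | h3
        · have h4 : k - 1 ≤ j := by omega
          simp [h, h3, h4]
        · have h4 : ¬ k - 1 ≤ j := by omega
          rw [if_neg h4, if_neg (by omega : ¬ k ≤ j)]; simp [h]
    have hsum1 : Summable (fun j : ℕ => if j = k - 1 then P (k - 1) else 0) :=
      summable_of_ne_finset_zero (s := {k - 1}) (by intro j hj; simp at hj; simp [hj])
    calc (∑' j : ℕ, if k - 1 ≤ j then P j else 0)
        = ∑' j : ℕ, ((if j = k - 1 then P (k - 1) else 0) + (if k ≤ j then P j else 0)) := by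
          exact tsum_congr heq
      _ = (∑' j : ℕ, if j = k - 1 then P (k - 1) else 0) + ∑' j : ℕ, (if k ≤ j then P j else 0) :=
          Summable.tsum_add hsum1 (hsum k)
      _ = P (k - 1) + ∑' j : ℕ, (if k ≤ j then P j else 0) := by
          rw [tsum_eq_single (k - 1) (by intro j hj; simp [hj])]
          simp
  have hFk_ge : P k ≤ Fbar k := by
    rw [hF k]
    have := Summable.le_tsum (hsum k) k (fun j _ => by split <;> [exact (hPpos j).le; rfl])
    simpa using this
  have hFkpos : 0 < Fbar k := lt_of_lt_of_le (hPpos k) hFk_ge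
  -- key identity
  have hid : P (k - 1) * lam = k * P k := by
    obtain ⟨m, rfl⟩ : ∃ m, k = m + 1 := ⟨k - 1, by omega⟩
    simp only [hP, Nat.add_sub_cancel, Nat.factorial_succ, pow_succ]
    have hm : (Nat.factorial m : ℝ) ≠ 0 := by exact_mod_cast (Nat.factorial_pos m).ne'
    push_cast
    field_simp
  have hratio : Fbar (k - 1) / Fbar k = P (k - 1) / Fbar k + 1 := by
    rw [hsplit]; field_simp
  have hmain : 1 - (Fbar (k - 1) / Fbar k - k / lam) = k / lam - P (k - 1) / Fbar k := by
    rw [hratio]; ring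
  rw [hmain]
  constructor
  · rw [sub_nonneg, div_le_div_iff₀ hFkpos hlam]
    rw [hid]
    have : P k ≤ Fbar k := hFk_ge
    calc (k : ℝ) * P k ≤ (k : ℝ) * Fbar k := by
          exact mul_le_mul_of_nonneg_left hFk_ge (by positivity)
      _ = (k : ℝ) * Fbar k := rfl
  · have : 0 ≤ P (k - 1) / Fbar k := le_of_lt (div_pos (hPpos _) hFkpos)
    linarith
end

section
/- Let N be a Poisson random variable with parameter λ > 0 conditioned on being at least m (i.e., P(N = k) = e^{-λ} λ^k / (k! · F̄(m)) for k ≥ m, where F̄(m) = ∑_{j≥m} e^{-λ}λ^j/j!). Then for every bounded function h : ℕ → ℝ, E[ λ(h(N+1) - h(N)) + N · 1{N > m} · (h(N-1) - h(N)) ] = 0. -/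
/-- The conditional Poisson distribution (Poisson(λ) conditioned on being at least m)
is stationary for the censored immigration-death generator. -/
theorem conditional_poisson_stationary (lam : ℝ) (hlam : 0 < lam) (m : ℕ)
    (Fbar : ℝ) (hFbar : Fbar = ∑' j : ℕ, if m ≤ j then Real.exp (-lam) * lam ^ j / (Nat.factorial j) else 0)
    (P : ℕ → ℝ)
    (hP : ∀ k : ℕ, P k = if m ≤ k then Real.exp (-lam) * lam ^ k / (Nat.factorial k * Fbar) else 0)
    (h : ℕ → ℝ) (hb : ∃ C : ℝ, ∀ n : ℕ, |h n| ≤ C) :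
    ∑' k : ℕ, P k * (lam * (h (k + 1) - h k)
        + (k : ℝ) * (if m < k then (1 : ℝ) else 0) * (h (k - 1) - h k)) = 0 := by
  obtain ⟨C, hC⟩ := hb
  have hC0 : 0 ≤ C := le_trans (abs_nonneg _) (hC 0)
  -- Poisson series is summable
  have hsum_pois : Summable (fun j : ℕ => Real.exp (-lam) * lam ^ j / (Nat.factorial j)) := by
    have := (Real.summable_pow_div_factorial lam).mul_left (Real.exp (-lam))
    simpa [mul_div_assoc] using this
  have hterm_nonneg : ∀ j : ℕ,
      0 ≤ (if m ≤ j then Real.exp (-lam) * lam ^ j / (Nat.factorial j) else 0) := by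
    intro j
    split
    · positivity
    · exact le_refl 0
  have hsumF : Summable (fun j : ℕ =>
      if m ≤ j then Real.exp (-lam) * lam ^ j / (Nat.factorial j) else 0) := by
    apply Summable.of_nonneg_of_le hterm_nonneg _ hsum_pois
    intro j
    split
    · exact le_refl _
    · positivity
  -- Fbar > 0
  have hFpos : 0 < Fbar := by
    have hle : Real.exp (-lam) * lam ^ m / (Nat.factorial m) ≤ Fbar := by
      rw [hFbar]
      have := Summable.le_tsum hsumF m (fun j _ => hterm_nonneg j)
      simpa using this
    have : 0 < Real.exp (-lam) * lam ^ m / (Nat.factorial m) := by positivity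
    linarith
  -- P is nonneg and summable
  have hPnn : ∀ k, 0 ≤ P k := by
    intro k
    rw [hP k]
    split
    · positivity
    · exact le_refl 0
  have hsumP : Summable P := by
    refine Summable.of_nonneg_of_le hPnn (fun k => ?_) (hsum_pois.mul_left (1 / Fbar))
    rw [hP k]
    split
    · rw [div_mul_eq_div_div, div_eq_mul_inv, one_div]
      ring_nf
      exact le_refl _
    · positivity
  -- the telescoping functions
  set f : ℕ → ℝ := fun k => lam * P k * (h (k + 1) - h k) with hfdef
  set g : ℕ → ℝ := fun k => if k = 0 then 0 else f (k - 1) with hgdef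
  have hsumf : Summable f := by
    apply Summable.of_abs
    refine Summable.of_nonneg_of_le (fun k => abs_nonneg _) (fun k => ?_)
      (hsumP.mul_left (lam * (2 * C)))
    ·
      have h1 : |h (k + 1) - h k| ≤ 2 * C := by
        calc |h (k + 1) - h k| ≤ |h (k + 1)| + |h k| := abs_sub _ _
          _ ≤ C + C := add_le_add (hC _) (hC _)
          _ = 2 * C := by ring
      calc |f k| = lam * P k * |h (k + 1) - h k| := by
            rw [hfdef]
            simp [abs_mul, abs_of_nonneg hlam.le, abs_of_nonneg (hPnn k)]
        _ ≤ lam * P k * (2 * C) := by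
            apply mul_le_mul_of_nonneg_left h1
            exact mul_nonneg hlam.le (hPnn k)
        _ = (lam * (2 * C)) * P k := by ring
  have hgshift : (fun n => g (n + 1)) = f := by
    funext n
    simp [hgdef]
  have hsumg : Summable g := by
    apply (summable_nat_add_iff 1).mp
    rw [hgshift]
    exact hsumf
  -- the pointwise identity
  have hid : ∀ k : ℕ, P k * (lam * (h (k + 1) - h k)
      + (k : ℝ) * (if m < k then (1 : ℝ) else 0) * (h (k - 1) - h k)) = f k - g k := by
    intro k
    match k with
    | 0 =>
      simp [hgdef, hfdef]
      ring
    | j + 1 =>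
      by_cases hmk : m < j + 1
      · have hmj : m ≤ j := Nat.lt_succ_iff.mp hmk
        -- key recursion: (j+1) * P (j+1) = lam * P j
        have hrec : ((j : ℝ) + 1) * P (j + 1) = lam * P j := by
          rw [hP (j + 1), hP j, if_pos (le_trans hmj (Nat.le_succ j)), if_pos hmj]
          have hfac : (Nat.factorial (j + 1) : ℝ) = ((j : ℝ) + 1) * Nat.factorial j := by
            rw [Nat.factorial_succ]
            push_cast
            ring
          have hfj : (Nat.factorial j : ℝ) ≠ 0 := Nat.cast_ne_zero.mpr (Nat.factorial_ne_zero j)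
          have hj1 : ((j : ℝ) + 1) ≠ 0 := by positivity
          rw [hfac]
          field_simp
          ring
        have hg : g (j + 1) = f j := by simp [hgdef]
        rw [if_pos hmk, hg, hfdef]
        simp only [Nat.add_sub_cancel]
        push_cast
        rw [← hrec]
        ring
      · -- m ≥ j + 1, death term vanishes; and if m > j+1 then P(j+1)=0
        rw [if_neg hmk]
        have hg : g (j + 1) = f j := by simp [hgdef]
        rw [hg]
        have hfj : f j = 0 := by
          have hPj : P j = 0 := by
            rw [hP j, if_neg]
            omega
          simp [hfdef, hPj]
        rw [hfj, hfdef]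
        ring
  calc ∑' k : ℕ, P k * (lam * (h (k + 1) - h k)
        + (k : ℝ) * (if m < k then (1 : ℝ) else 0) * (h (k - 1) - h k))
      = ∑' k : ℕ, (f k - g k) := tsum_congr hid
    _ = (∑' k, f k) - ∑' k, g k := Summable.tsum_sub hsumf hsumg
    _ = 0 := by
        have : ∑' k, g k = ∑' k, f k := by
          rw [Summable.tsum_eq_zero_add hsumg]
          simp [hgdef]
        rw [this]
        ring
end

section
/- For every λ > 0, ∫₀^1 (1 - e^{-λu})/u du ≤ 0.95 + max(log λ, 0). -/
/-!
Substituting `t = λu` turns the integral into `Ein λ = ∫₀^λ (1 - e^{-t})/t dt`. The integrand is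
nonnegative, at most `1/t`, and on `[0, 1]` at most `1 - t/2 + 2t²/9` by the third-order Taylor
bound for `e^{-t}`. Hence `Ein λ ≤ Ein 1 ≤ 89/108` for `λ ≤ 1`, and `Ein λ ≤ Ein 1 + log λ`
for `λ ≥ 1`.
-/

open Real MeasureTheory intervalIntegral Set

noncomputable def Ein (x : ℝ) : ℝ :=
  ∫ t in (0:ℝ)..x, (1 - exp (-t)) / t

lemma one_sub_exp_neg_div_nonneg (t : ℝ) : 0 ≤ (1 - exp (-t)) / t := by
  rcases le_total 0 t with ht | ht
  · exact div_nonneg (sub_nonneg.2 (exp_le_one_iff.2 (neg_nonpos.2 ht))) ht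
  · exact div_nonneg_of_nonpos (sub_nonpos.2 (one_le_exp (neg_nonneg.2 ht))) ht

lemma one_sub_exp_neg_div_le_one {t : ℝ} (ht : 0 ≤ t) : (1 - exp (-t)) / t ≤ 1 :=
  div_le_one_of_le₀ (by linarith [add_one_le_exp (-t)]) ht

lemma one_sub_exp_neg_div_le_one_div {t : ℝ} (ht : 0 ≤ t) : (1 - exp (-t)) / t ≤ 1 / t :=
  div_le_div_of_nonneg_right (by linarith [exp_pos (-t)]) ht

lemma one_sub_exp_neg_div_le_quadratic {t : ℝ} (h0 : 0 ≤ t) (h1 : t ≤ 1) :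
    (1 - exp (-t)) / t ≤ 1 - t / 2 + 2 * t ^ 2 / 9 := by
  rcases h0.eq_or_lt with rfl | ht
  · norm_num
  have taylor : |exp (-t) - (1 + -t + t ^ 2 / 2)| ≤ t ^ 3 * (2 / 9) := by
    have := Real.exp_bound (x := -t) (by rwa [abs_neg, abs_of_pos ht]) (n := 3) (by norm_num)
    norm_num [Finset.sum_range_succ, abs_of_pos ht] at this
    exact this
  rw [div_le_iff₀ ht]
  nlinarith [(abs_le.1 taylor).1]

lemma intervalIntegrable_one_sub_exp_neg_div {a b : ℝ} (ha : 0 ≤ a) (hb : 0 ≤ b) :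
    IntervalIntegrable (fun t => (1 - exp (-t)) / t) volume a b := by
  refine (intervalIntegrable_const (c := (1:ℝ))).mono_fun'
    (Measurable.aestronglyMeasurable (by fun_prop)) ?_
  filter_upwards [ae_restrict_mem measurableSet_uIoc] with t ht
  have ht0 : 0 ≤ t := (le_min ha hb).trans (le_of_lt ht.1)
  rw [norm_of_nonneg (one_sub_exp_neg_div_nonneg t)]
  exact one_sub_exp_neg_div_le_one ht0

lemma integral_one_sub_exp_neg_mul_div {c : ℝ} (hc : c ≠ 0) :
    ∫ u in (0:ℝ)..1, (1 - exp (-c * u)) / u = Ein c := by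
  have hscale : (fun u => (1 - exp (-c * u)) / u) =
      fun u => c * ((1 - exp (-(c * u))) / (c * u)) := by
    ext u
    rw [neg_mul, mul_div_assoc', mul_div_mul_left _ _ hc]
  rw [hscale, intervalIntegral.integral_const_mul,
    intervalIntegral.integral_comp_mul_left (fun t => (1 - exp (-t)) / t) hc,
    mul_zero, mul_one, smul_eq_mul, mul_inv_cancel_left₀ hc, Ein]

lemma Ein_le_Ein {x y : ℝ} (hx : 0 ≤ x) (hxy : x ≤ y) : Ein x ≤ Ein y :=
  intervalIntegral.integral_mono_interval le_rfl hx hxy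
    (Filter.Eventually.of_forall one_sub_exp_neg_div_nonneg)
    (intervalIntegrable_one_sub_exp_neg_div le_rfl (hx.trans hxy))

lemma Ein_one_le : Ein 1 ≤ 89 / 108 := by
  have hbound : Ein 1 ≤ ∫ t in (0:ℝ)..1, (1 - t / 2 + 2 * t ^ 2 / 9) :=
    intervalIntegral.integral_mono_on zero_le_one
      (intervalIntegrable_one_sub_exp_neg_div le_rfl zero_le_one)
      (Continuous.intervalIntegrable (by fun_prop) _ _)
      fun t ht => one_sub_exp_neg_div_le_quadratic ht.1 ht.2
  have hpoly : ∫ t in (0:ℝ)..1, (1 - t / 2 + 2 * t ^ 2 / 9) = 89 / 108 := by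
    rw [intervalIntegral.integral_add (Continuous.intervalIntegrable (by fun_prop) _ _)
        (Continuous.intervalIntegrable (by fun_prop) _ _),
      intervalIntegral.integral_sub intervalIntegrable_const
        (Continuous.intervalIntegrable (by fun_prop) _ _)]
    norm_num [intervalIntegral.integral_div, intervalIntegral.integral_const_mul]
  linarith

lemma Ein_le_Ein_one_add_log {x : ℝ} (hx : 1 ≤ x) : Ein x ≤ Ein 1 + log x := by
  have hx0 : 0 < x := zero_lt_one.trans_le hx
  have htail : ∫ t in (1:ℝ)..x, (1 - exp (-t)) / t ≤ log x :=
    calc ∫ t in (1:ℝ)..x, (1 - exp (-t)) / t ≤ ∫ t in (1:ℝ)..x, 1 / t :=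
          intervalIntegral.integral_mono_on hx
            (intervalIntegrable_one_sub_exp_neg_div zero_le_one hx0.le)
            (intervalIntegrable_one_div
              (fun t ht => (zero_lt_one.trans_le (uIcc_of_le hx ▸ ht).1).ne') (by fun_prop))
            fun t ht => one_sub_exp_neg_div_le_one_div (zero_le_one.trans ht.1)
      _ = log x := by rw [integral_one_div_of_pos one_pos hx0, div_one]
  unfold Ein
  rw [← intervalIntegral.integral_add_adjacent_intervals
    (intervalIntegrable_one_sub_exp_neg_div le_rfl zero_le_one)
    (intervalIntegrable_one_sub_exp_neg_div zero_le_one hx0.le)]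
  linarith

theorem integral_one_sub_exp_div_le (lam : ℝ) (hlam : 0 < lam) :
    ∫ u in (0:ℝ)..1, (1 - Real.exp (-lam * u)) / u ≤ 0.95 + max (Real.log lam) 0 := by
  rw [integral_one_sub_exp_neg_mul_div hlam.ne']
  rcases le_total lam 1 with hle | hge
  · linarith [Ein_le_Ein hlam.le hle, Ein_one_le, le_max_right (log lam) 0]
  · linarith [Ein_le_Ein_one_add_log hge, Ein_one_le, le_max_left (log lam) 0]
end

section
/- Let W be a binomial random variable with parameters n ≥ 1 and p ∈ (0,1). Then the total variation distance between the laws of W + 1 and W satisfies d_TV(L(W+1), L(W)) ≤ min(1, 1/(2√(np(1-p)))). -/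
/-!
Write `b k` for the Binomial(n, p) mass and `j = n - k`. The mass is unimodal with mode
`m = ⌊(n + 1) p⌋`, so `b (k - 1) - b k` is `≤ 0` up to `m` and `≥ 0` beyond it; for every `A`
the difference `P(W + 1 ∈ A) - P(W ∈ A)` therefore lies between the two telescoping sums
`-b m` and `b m`.

It remains to show `b k ≤ 1 / (2 √(npq))`. Squared, `4npq (b k)² = 4n C(n,k)² p^(2k+1) q^(2j+1)`,
and AM-GM bounds `p^a q^b` by `a^a b^b / (a + b)^(a + b)`. The remaining integer quantity
`C(n,k)² (2k+1)^(2k+1) (2j+1)^(2j+1)` decreases as `k` moves from either end towards `n / 2`,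
because `a ↦ (a+2)^(a+2) / (a^a (a+1)²)` is increasing (equivalently `log (1 + 2/a) ≥ 2/(a+1)`);
at `k = 0` the bound is Bernoulli's inequality `(1 + 1/r)^r ≥ 2`.
-/

open Real Set

lemma two_mul_le_log_one_add_sub_log_one_sub {x : ℝ} (hx0 : 0 ≤ x) (hx1 : x < 1) :
    2 * x ≤ log (1 + x) - log (1 - x) := by
  have h := hasSum_log_sub_log_of_abs_lt_one (abs_lt.2 ⟨by linarith, hx1⟩)
  simpa using le_hasSum h 0 fun j _ => by positivity

lemma two_div_add_one_le_log_add_two_sub_log {a : ℝ} (ha : 0 < a) :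
    2 / (a + 1) ≤ log (a + 2) - log a := by
  have h := two_mul_le_log_one_add_sub_log_one_sub (x := 1 / (a + 1)) (by positivity)
    (by rw [div_lt_one (by linarith)]; linarith)
  have h1 : 1 + 1 / (a + 1) = (a + 2) / (a + 1) := by field_simp; ring
  have h2 : 1 - 1 / (a + 1) = a / (a + 1) := by field_simp; ring
  rw [h1, h2, log_div (by linarith) (by linarith), log_div ha.ne' (by linarith)] at h
  convert h using 1 <;> ring

/-- The logarithm of `(a + 2) ^ (a + 2) / (a ^ a * (a + 1) ^ 2)`. -/
lemma monotoneOn_log_selfPowRatio :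
    MonotoneOn (fun a : ℝ => (a + 2) * log (a + 2) - a * log a - 2 * log (a + 1)) (Ioi 0) := by
  have hderiv : ∀ a ∈ Ioi (0 : ℝ), HasDerivAt
      (fun a : ℝ => (a + 2) * log (a + 2) - a * log a - 2 * log (a + 1))
      ((log (a + 2) + 1) - (log a + 1) - 2 * (1 / (a + 1))) a := by
    intro a (ha : 0 < a)
    have h2 := (hasDerivAt_mul_log (x := a + 2) (by linarith)).comp_add_const a 2
    have h1 := ((hasDerivAt_id' a).add_const 1).log (by simp; linarith)
    exact ((h2.sub (hasDerivAt_mul_log ha.ne')).sub (h1.const_mul 2)).congr_deriv (by simp)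
  refine monotoneOn_of_hasDerivWithinAt_nonneg (convex_Ioi 0)
    (fun a ha => (hderiv a ha).continuousAt.continuousWithinAt)
    (fun a ha => (hderiv a (interior_subset ha)).hasDerivWithinAt) fun a ha => ?_
  rw [interior_Ioi] at ha
  have := two_div_add_one_le_log_add_two_sub_log ha
  rw [mul_one_div]
  linarith

lemma selfPowRatio_le_of_le {u v : ℕ} (hu : 0 < u) (huv : u ≤ v) :
    ((v : ℝ) + 1) ^ 2 * ((u : ℝ) + 2) ^ (u + 2) * (v : ℝ) ^ v ≤
      ((u : ℝ) + 1) ^ 2 * (u : ℝ) ^ u * ((v : ℝ) + 2) ^ (v + 2) := by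
  have hu' : (0 : ℝ) < u := by exact_mod_cast hu
  have hv' : (0 : ℝ) < v := by exact_mod_cast hu.trans_le huv
  have h := monotoneOn_log_selfPowRatio (a := (u : ℝ)) (b := v) hu' hv' (by exact_mod_cast huv)
  simp only at h
  rw [← log_le_log_iff (by positivity) (by positivity)]
  rw [log_mul (by positivity) (by positivity), log_mul (by positivity) (by positivity),
    log_mul (by positivity) (by positivity), log_mul (by positivity) (by positivity),
    log_pow, log_pow, log_pow, log_pow, log_pow, log_pow]
  push_cast
  linarith

lemma pow_le_exp_mul_sub_one {u : ℝ} (hu : 0 ≤ u) (a : ℕ) : u ^ a ≤ exp (a * (u - 1)) := by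
  rw [exp_nat_mul]
  exact pow_le_pow_left₀ hu (by linarith [add_one_le_exp (u - 1)]) a

lemma pow_mul_pow_mul_add_pow_le {x y : ℝ} (hx : 0 ≤ x) (hy : 0 ≤ y) (hxy : x + y = 1)
    {a b : ℕ} (ha : 0 < a) (hb : 0 < b) :
    x ^ a * y ^ b * ((a : ℝ) + b) ^ (a + b) ≤ (a : ℝ) ^ a * (b : ℝ) ^ b := by
  have ha' : (0 : ℝ) < a := by exact_mod_cast ha
  have hb' : (0 : ℝ) < b := by exact_mod_cast hb
  set s : ℝ := a + b
  have hprod : (x * s / a) ^ a * (y * s / b) ^ b ≤ 1 := calc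
    _ ≤ exp (a * (x * s / a - 1)) * exp (b * (y * s / b - 1)) :=
      mul_le_mul (pow_le_exp_mul_sub_one (by positivity) a)
        (pow_le_exp_mul_sub_one (by positivity) b) (by positivity) (by positivity)
    _ = 1 := by
      rw [← exp_add, exp_eq_one_iff]
      field_simp
      linear_combination s * hxy
  calc x ^ a * y ^ b * s ^ (a + b)
      = (x * s / a) ^ a * (y * s / b) ^ b * ((a : ℝ) ^ a * (b : ℝ) ^ b) := by
        rw [div_pow, div_pow, mul_pow, mul_pow, pow_add]
        field_simp
    _ ≤ (a : ℝ) ^ a * (b : ℝ) ^ b := mul_le_of_le_one_left (by positivity) hprod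

lemma two_mul_pow_le_add_one_pow {m : ℕ} (hm : 0 < m) : 2 * (m : ℝ) ^ m ≤ ((m : ℝ) + 1) ^ m := by
  have hm' : (0 : ℝ) < m := by exact_mod_cast hm
  have h := one_add_mul_le_pow (a := 1 / (m : ℝ)) (by linarith [one_div_pos.2 hm']) m
  rw [mul_one_div_cancel hm'.ne', one_add_one_eq_two] at h
  calc 2 * (m : ℝ) ^ m ≤ (1 + 1 / m) ^ m * m ^ m := by gcongr
    _ = ((m : ℝ) + 1) ^ m := by rw [← mul_pow]; field_simp

noncomputable def oddPowChooseSq (k j : ℕ) : ℝ :=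
  ((k + j).choose k : ℝ) ^ 2 * (2 * k + 1 : ℝ) ^ (2 * k + 1) * (2 * j + 1 : ℝ) ^ (2 * j + 1)

lemma oddPowChooseSq_comm (k j : ℕ) : oddPowChooseSq k j = oddPowChooseSq j k := by
  rw [oddPowChooseSq, oddPowChooseSq, Nat.choose_symm_add, add_comm k j]
  ring

lemma oddPowChooseSq_succ_le {k j : ℕ} (h : k ≤ j) :
    oddPowChooseSq (k + 1) j ≤ oddPowChooseSq k (j + 1) := by
  have hchoose : ((k + j + 1).choose (k + 1) : ℝ) * (k + 1) = (k + j + 1).choose k * (j + 1) := by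
    have := Nat.choose_succ_right_eq (k + j + 1) k
    rw [show k + j + 1 - k = j + 1 by omega] at this
    exact_mod_cast this
  set C₀ : ℝ := ((k + j + 1).choose k : ℝ)
  set C₁ : ℝ := ((k + j + 1).choose (k + 1) : ℝ)
  have hL : oddPowChooseSq (k + 1) j =
      C₁ ^ 2 * (2 * k + 1 + 2) ^ (2 * k + 1 + 2) * (2 * j + 1) ^ (2 * j + 1) := by
    rw [oddPowChooseSq, show k + 1 + j = k + j + 1 by omega]
    push_cast
    ring
  have hR : oddPowChooseSq k (j + 1) =
      C₀ ^ 2 * (2 * k + 1) ^ (2 * k + 1) * (2 * j + 1 + 2) ^ (2 * j + 1 + 2) := by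
    rw [oddPowChooseSq, show k + (j + 1) = k + j + 1 by omega]
    push_cast
    ring
  have hstep := selfPowRatio_le_of_le (u := 2 * k + 1) (v := 2 * j + 1) (by omega) (by omega)
  push_cast at hstep
  rw [← mul_le_mul_iff_of_pos_right (by positivity : (0 : ℝ) < 4 * ((k : ℝ) + 1) ^ 2), hL, hR]
  calc C₁ ^ 2 * (2 * k + 1 + 2) ^ (2 * k + 1 + 2) * (2 * j + 1) ^ (2 * j + 1) *
        (4 * ((k : ℝ) + 1) ^ 2)
      = C₀ ^ 2 * ((2 * j + 1 + 1) ^ 2 * (2 * k + 1 + 2) ^ (2 * k + 1 + 2) *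
          (2 * j + 1) ^ (2 * j + 1)) := by
        linear_combination (4 * (2 * k + 1 + 2 : ℝ) ^ (2 * k + 1 + 2) * (2 * j + 1) ^ (2 * j + 1) *
          (C₁ * (k + 1) + C₀ * (j + 1))) * hchoose
    _ ≤ C₀ ^ 2 * ((2 * k + 1 + 1) ^ 2 * (2 * k + 1) ^ (2 * k + 1) *
          (2 * j + 1 + 2) ^ (2 * j + 1 + 2)) := by
        gcongr
    _ = C₀ ^ 2 * (2 * k + 1) ^ (2 * k + 1) * (2 * j + 1 + 2) ^ (2 * j + 1 + 2) *
          (4 * ((k : ℝ) + 1) ^ 2) := by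
        ring

lemma oddPowChooseSq_le_of_le {k j : ℕ} (h : k ≤ j) :
    oddPowChooseSq k j ≤ oddPowChooseSq 0 (k + j) := by
  induction k generalizing j with
  | zero => simp
  | succ k ih => calc
      oddPowChooseSq (k + 1) j ≤ oddPowChooseSq k (j + 1) := oddPowChooseSq_succ_le (by omega)
      _ ≤ oddPowChooseSq 0 (k + (j + 1)) := ih (by omega)
      _ = oddPowChooseSq 0 (k + 1 + j) := by rw [add_right_comm, add_assoc]

lemma oddPowChooseSq_le (k j : ℕ) : oddPowChooseSq k j ≤ oddPowChooseSq 0 (k + j) := by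
  rcases le_total k j with h | h
  · exact oddPowChooseSq_le_of_le h
  · rw [oddPowChooseSq_comm, add_comm]
    exact oddPowChooseSq_le_of_le h

lemma four_mul_oddPowChooseSq_le (k j : ℕ) :
    4 * ((k + j : ℕ) : ℝ) * oddPowChooseSq k j ≤
      (2 * ((k + j : ℕ) : ℝ) + 2) ^ (2 * (k + j) + 2) := by
  set N := k + j
  have hbern := two_mul_pow_le_add_one_pow (m := 2 * N + 1) (by omega)
  push_cast at hbern
  calc 4 * (N : ℝ) * oddPowChooseSq k j ≤ 4 * N * oddPowChooseSq 0 N := by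
        gcongr
        exact oddPowChooseSq_le k j
    _ = 4 * N * (2 * N + 1) ^ (2 * N + 1) := by simp [oddPowChooseSq]
    _ ≤ (2 * N + 2) * (2 * (2 * N + 1) ^ (2 * N + 1)) := by
        nlinarith [pow_nonneg (by positivity : (0 : ℝ) ≤ 2 * N + 1) (2 * N + 1)]
    _ ≤ (2 * N + 2) * (2 * N + 1 + 1) ^ (2 * N + 1) := by gcongr
    _ = (2 * N + 2) ^ (2 * N + 2) := by ring

noncomputable def binomialMass (n : ℕ) (p : ℝ) (k : ℕ) : ℝ :=
  n.choose k * p ^ k * (1 - p) ^ (n - k)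

section Binomial

variable {n : ℕ} {p : ℝ}

lemma binomialMass_nonneg (hp0 : 0 ≤ p) (hp1 : p ≤ 1) (k : ℕ) : 0 ≤ binomialMass n p k := by
  have : 0 ≤ 1 - p := by linarith
  unfold binomialMass
  positivity

lemma binomialMass_eq_zero_of_lt {k : ℕ} (h : n < k) : binomialMass n p k = 0 := by
  simp [binomialMass, Nat.choose_eq_zero_of_lt h]

lemma summable_binomialMass : Summable (binomialMass n p) :=
  summable_of_ne_finset_zero (s := Finset.range (n + 1)) fun k hk =>
    binomialMass_eq_zero_of_lt (by simpa using hk)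

lemma binomialMass_le_one (hp0 : 0 ≤ p) (hp1 : p ≤ 1) (k : ℕ) : binomialMass n p k ≤ 1 := by
  rcases le_or_gt k n with hk | hk
  · have hsum : ∑ i ∈ Finset.range (n + 1), binomialMass n p i = 1 := by
      have h := add_pow p (1 - p) n
      rw [add_sub_cancel, one_pow] at h
      rw [h]
      exact Finset.sum_congr rfl fun i _ => by rw [binomialMass]; ring
    rw [← hsum]
    exact Finset.single_le_sum (fun i _ => binomialMass_nonneg hp0 hp1 i)
      (Finset.mem_range.2 (Nat.lt_succ_of_le hk))
  · rw [binomialMass_eq_zero_of_lt hk]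
    exact zero_le_one

lemma binomialMass_succ_mul (n : ℕ) (p : ℝ) (k : ℕ) :
    binomialMass n p (k + 1) * ((k + 1) * (1 - p)) = binomialMass n p k * ((n - k : ℕ) * p) := by
  rcases lt_or_ge k n with hk | hk
  · have hchoose : (n.choose (k + 1) : ℝ) * (k + 1) = n.choose k * (n - k : ℕ) := by
      exact_mod_cast Nat.choose_succ_right_eq n k
    have hpow : (1 - p) ^ (n - k) = (1 - p) ^ (n - (k + 1)) * (1 - p) := by
      rw [← pow_succ, show n - (k + 1) + 1 = n - k by omega]
    rw [binomialMass, binomialMass, hpow]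
    linear_combination p ^ (k + 1) * (1 - p) ^ (n - (k + 1)) * (1 - p) * hchoose
  · simp [binomialMass, Nat.choose_eq_zero_of_lt (Nat.lt_succ_of_le hk), Nat.sub_eq_zero_of_le hk]

lemma binomialMass_le_succ (hp0 : 0 ≤ p) (hp1 : p < 1) {k : ℕ}
    (hk : (k : ℝ) + 1 ≤ (n + 1) * p) :
    binomialMass n p k ≤ binomialMass n p (k + 1) := by
  have hkn : k < n := by
    by_contra! h
    have : (n : ℝ) ≤ k := by exact_mod_cast h
    nlinarith
  have hratio : ((k : ℝ) + 1) * (1 - p) ≤ (n - k : ℕ) * p := by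
    rw [Nat.cast_sub hkn.le]
    linarith
  refine le_of_mul_le_mul_right ?_ (by nlinarith : (0 : ℝ) < (k + 1) * (1 - p))
  rw [binomialMass_succ_mul]
  exact mul_le_mul_of_nonneg_left hratio (binomialMass_nonneg hp0 hp1.le k)

lemma binomialMass_succ_le (hp0 : 0 ≤ p) (hp1 : p < 1) {k : ℕ}
    (hk : (n + 1) * p ≤ (k : ℝ) + 1) :
    binomialMass n p (k + 1) ≤ binomialMass n p k := by
  have hratio : ((n - k : ℕ) : ℝ) * p ≤ ((k : ℝ) + 1) * (1 - p) := by
    rcases le_or_gt n k with hkn | hkn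
    · rw [Nat.sub_eq_zero_of_le hkn, Nat.cast_zero, zero_mul]
      nlinarith
    · rw [Nat.cast_sub hkn.le]
      linarith
  refine le_of_mul_le_mul_right ?_ (by nlinarith : (0 : ℝ) < (k + 1) * (1 - p))
  rw [binomialMass_succ_mul]
  exact mul_le_mul_of_nonneg_left hratio (binomialMass_nonneg hp0 hp1.le k)

lemma binomialMass_le_inv_two_sqrt (hn : 0 < n) (hp0 : 0 < p) (hp1 : p < 1) (k : ℕ) :
    binomialMass n p k ≤ 1 / (2 * √(n * p * (1 - p))) := by
  have hq : 0 < 1 - p := by linarith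
  have hn' : (0 : ℝ) < n := by exact_mod_cast hn
  rw [le_div_iff₀ (by positivity)]
  rcases lt_or_ge n k with hk | hk
  · rw [binomialMass_eq_zero_of_lt hk, zero_mul]
    exact zero_le_one
  obtain ⟨j, rfl⟩ := Nat.exists_eq_add_of_le hk
  have hamgm := pow_mul_pow_mul_add_pow_le hp0.le hq.le (add_sub_cancel p 1)
    (a := 2 * k + 1) (b := 2 * j + 1) (by omega) (by omega)
  push_cast at hamgm
  have hD : (0 : ℝ) < (2 * ((k + j : ℕ) : ℝ) + 2) ^ (2 * (k + j) + 2) := by positivity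
  have hsq : (binomialMass (k + j) p k * (2 * √((k + j : ℕ) * p * (1 - p)))) ^ 2 ≤ 1 := by
    rw [← mul_le_mul_iff_of_pos_right hD]
    calc (binomialMass (k + j) p k * (2 * √((k + j : ℕ) * p * (1 - p)))) ^ 2 *
          (2 * ((k + j : ℕ) : ℝ) + 2) ^ (2 * (k + j) + 2)
        = 4 * ((k + j : ℕ) : ℝ) * ((k + j).choose k : ℝ) ^ 2 * (p ^ (2 * k + 1) *
            (1 - p) ^ (2 * j + 1) * (2 * k + 1 + (2 * j + 1)) ^ (2 * k + 1 + (2 * j + 1))) := by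
          rw [mul_pow, mul_pow, sq_sqrt (by positivity), binomialMass, Nat.add_sub_cancel_left]
          push_cast
          ring
      _ ≤ 4 * ((k + j : ℕ) : ℝ) * ((k + j).choose k : ℝ) ^ 2 *
            ((2 * k + 1) ^ (2 * k + 1) * (2 * j + 1) ^ (2 * j + 1)) := by gcongr
      _ = 4 * ((k + j : ℕ) : ℝ) * oddPowChooseSq k j := by rw [oddPowChooseSq]; ring
      _ ≤ _ := by simpa using four_mul_oddPowChooseSq_le k j
  exact (pow_le_one_iff_of_nonneg
    (mul_nonneg (binomialMass_nonneg hp0.le hp1.le k) (by positivity)) two_ne_zero).1 hsq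

end Binomial

section Shift

variable {f g : ℕ → ℝ} (hg : ∀ k, g k = if k = 0 then 0 else f (k - 1))
include hg

lemma summable_shift (hf : Summable f) : Summable g :=
  (summable_nat_add_iff 1).1 (by simpa [hg] using hf)

lemma tsum_indicator_Iic_shift_sub (m : ℕ) : ∑' k, (Iic m).indicator (g - f) k = -f m := by
  rw [tsum_eq_sum (s := Finset.range (m + 1)) fun k hk => indicator_of_notMem (by simpa using hk) _,
    Finset.sum_congr rfl fun k hk => indicator_of_mem (by simpa [Nat.lt_succ_iff] using hk) _]
  rw [Pi.sub_def, Finset.sum_sub_distrib, Finset.sum_range_succ' g, Finset.sum_range_succ f]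
  simp [hg]

lemma tsum_indicator_Ioi_shift_sub (hf : Summable f) (m : ℕ) :
    ∑' k, (Ioi m).indicator (g - f) k = f m := by
  have hd : Summable (g - f) := (summable_shift hg hf).sub hf
  have htotal : ∑' k, (g - f) k = 0 := by
    rw [Pi.sub_def, (summable_shift hg hf).tsum_sub hf, (summable_shift hg hf).tsum_eq_zero_add]
    simp [hg]
  have hsplit : ∑' k, (Iic m).indicator (g - f) k + ∑' k, (Ioi m).indicator (g - f) k =
      ∑' k, (g - f) k := by
    rw [← compl_Iic, ← (hd.indicator _).tsum_add (hd.indicator _)]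
    exact (congrArg tsum (indicator_self_add_compl (Iic m) (g - f)) :)
  rw [tsum_indicator_Iic_shift_sub hg m, htotal] at hsplit
  linarith

lemma abs_tsum_indicator_shift_sub_le (hf0 : 0 ≤ f) (hf : Summable f) {m : ℕ}
    (hmono : ∀ k < m, f k ≤ f (k + 1)) (hanti : ∀ k, m ≤ k → f (k + 1) ≤ f k) (A : Set ℕ) :
    |∑' k, A.indicator g k - ∑' k, A.indicator f k| ≤ f m := by
  have hd : Summable (g - f) := (summable_shift hg hf).sub hf
  have hd_nonpos : ∀ k ≤ m, g k ≤ f k := by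
    rintro (_ | k) hk
    · simpa [hg] using hf0 0
    · simpa [hg] using hmono k hk
  have hd_nonneg : ∀ k, m < k → f k ≤ g k := by
    rintro (_ | k) hk
    · omega
    · simpa [hg] using hanti k (by omega)
  have hdiff : ∑' k, A.indicator g k - ∑' k, A.indicator f k = ∑' k, A.indicator (g - f) k := by
    rw [← ((summable_shift hg hf).indicator A).tsum_sub (hf.indicator A), indicator_sub']
    rfl
  rw [hdiff, abs_le, ← tsum_indicator_Iic_shift_sub hg m,
    ← tsum_indicator_Ioi_shift_sub hg hf m]
  constructor <;> refine (hd.indicator _).tsum_le_tsum (fun k => ?_) (hd.indicator _) <;>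
    by_cases hA : k ∈ A <;> rcases le_or_gt k m with hk | hk <;>
    simp [hA, hk, hd_nonpos, hd_nonneg]

end Shift

/-- Barbour–Jensen: total variation distance between Binomial(n,p) shifted by 1 and itself.
The total variation distance is expressed as the supremum over subsets A ⊆ ℕ of the
difference of the probabilities of A under the laws of W+1 and W. -/
theorem binomial_shift_tv_bound (n : ℕ) (hn : 1 ≤ n) (p : ℝ) (hp : 0 < p) (hp1 : p < 1)
    (pW : ℕ → ℝ) (hpW : ∀ k : ℕ, pW k = (n.choose k : ℝ) * p ^ k * (1 - p) ^ (n - k))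
    (pW1 : ℕ → ℝ) (hpW1 : ∀ k : ℕ, pW1 k = if k = 0 then 0 else pW (k - 1)) :
    (⨆ A : Set ℕ, |(∑' k : ℕ, A.indicator pW1 k) - ∑' k : ℕ, A.indicator pW k|)
      ≤ min 1 (1 / (2 * Real.sqrt (n * p * (1 - p)))) := by
  obtain rfl : pW = binomialMass n p := funext hpW
  set m := ⌊((n : ℝ) + 1) * p⌋₊
  have hmono : ∀ k < m, binomialMass n p k ≤ binomialMass n p (k + 1) := fun k hk => by
    have hkm : (k : ℝ) + 1 ≤ m := by exact_mod_cast hk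
    exact binomialMass_le_succ hp.le hp1 (hkm.trans (Nat.floor_le (by positivity)))
  have hanti : ∀ k, m ≤ k → binomialMass n p (k + 1) ≤ binomialMass n p k := fun k hk => by
    have hmk : (m : ℝ) ≤ k := by exact_mod_cast hk
    exact binomialMass_succ_le hp.le hp1 ((Nat.lt_floor_add_one _).le.trans (by linarith))
  refine ciSup_le fun A => ?_
  have hA := abs_tsum_indicator_shift_sub_le hpW1 (binomialMass_nonneg hp.le hp1.le)
    summable_binomialMass hmono hanti A
  exact le_min (hA.trans (binomialMass_le_one hp.le hp1.le m))
    (hA.trans (binomialMass_le_inv_two_sqrt hn hp hp1 m))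
end
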